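/- arXiv:2101.10159 — 5 statements merged into one kernel-verified Lean document; each statement's English description precedes it below -/
import Mathlib

section
/- Let n be a positive integer and let P1d, P1i, P2d, P2i be n×n real symmetric positive semidefinite matrices. For w ∈ (0,1) define P₁(w) = (1/w)·P1d + P1i, P₂(w) = (1/(1−w))·P2d + P2i, and P(w) = (P₁(w)⁻¹ + P₂(w)⁻¹)⁻¹. Assume P₁(w) and P₂(w) are positive definite for every w ∈ (0,1). Then the function w ↦ det(P(w)) is convex on the open interval (0,1). -/
/-!
Write `G w = P₁(w)⁻¹ + P₂(w)⁻¹`, so the function is `w ↦ (det G w)⁻¹`. Each `w ↦ ((1/w) D + E)⁻¹`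
is concave in the Loewner order: `x ⬝ A⁻¹ x` is the maximum over `y` of `2 x ⬝ y - y ⬝ A y`, and
for `A = (1/w) D + E` this is jointly concave in `(w, y)` because `y ⬝ D y / w` is the perspective
of a convex quadratic; a partial maximum of a jointly concave function is concave. Hence `G` is
Loewner-concave. On positive definite matrices the determinant is monotone and log-concave
(diagonalize simultaneously, then weighted AM-GM on the eigenvalues), so `det G` is log-concave,
its inverse is log-convex, and a log-convex function is convex.
-/

open Matrix Set
open scoped MatrixOrder

section Convexity

variable {E V : Type*} [AddCommGroup E] [Module ℝ E] [AddCommGroup V] [Module ℝ V]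

theorem ConvexOn.perspective {g : V → ℝ} (hg : ConvexOn ℝ univ g) :
    ConvexOn ℝ (Ioi 0 ×ˢ univ) (fun z : ℝ × V => z.1 * g (z.1⁻¹ • z.2)) := by
  refine ⟨(convex_Ioi 0).prod convex_univ, ?_⟩
  rintro ⟨s, p⟩ ⟨hs, -⟩ ⟨t, q⟩ ⟨ht, -⟩ a b ha hb hab
  simp only [mem_Ioi] at hs ht
  simp only [Prod.smul_mk, Prod.mk_add_mk, smul_eq_mul]
  have hw : 0 < a * s + b * t := by
    rcases ha.lt_or_eq with ha | rfl
    · positivity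
    · simp_all
  have hcomb : (a * s + b * t)⁻¹ • (a • p + b • q)
      = (a * s / (a * s + b * t)) • (s⁻¹ • p) + (b * t / (a * s + b * t)) • (t⁻¹ • q) := by
    simp only [smul_smul, smul_add]
    congr 2 <;> field_simp
  calc (a * s + b * t) * g ((a * s + b * t)⁻¹ • (a • p + b • q))
      ≤ (a * s + b * t) * ((a * s / (a * s + b * t)) • g (s⁻¹ • p)
          + (b * t / (a * s + b * t)) • g (t⁻¹ • q)) := by
        rw [hcomb]
        gcongr
        exact hg.2 trivial trivial (by positivity) (by positivity) (by field_simp)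
    _ = a * (s * g (s⁻¹ • p)) + b * (t * g (t⁻¹ • q)) := by
        simp only [smul_eq_mul]
        field_simp

theorem ConcaveOn.apply_maximizer {S : Set E} {φ : E × V → ℝ} (y : E → V)
    (hφ : ConcaveOn ℝ (S ×ˢ univ) φ) (hmax : ∀ w ∈ S, ∀ z, φ (w, z) ≤ φ (w, y w)) :
    ConcaveOn ℝ S (fun w => φ (w, y w)) := by
  have hS : Convex ℝ S := by
    simpa [fst_image_prod _ univ_nonempty] using hφ.1.linear_image (LinearMap.fst ℝ E V)
  refine ⟨hS, fun s hs t ht a b ha hb hab => ?_⟩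
  calc a • φ (s, y s) + b • φ (t, y t)
      ≤ φ (a • s + b • t, a • y s + b • y t) := hφ.2 ⟨hs, trivial⟩ ⟨ht, trivial⟩ ha hb hab
    _ ≤ φ (a • s + b • t, y (a • s + b • t)) := hmax _ (hS hs ht ha hb hab) _

end Convexity

namespace Matrix

variable {ι : Type*} [Fintype ι]

lemma IsHermitian.dotProduct_mulVec_comm {M : Matrix ι ι ℝ} (hM : M.IsHermitian) (x y : ι → ℝ) :
    x ⬝ᵥ M *ᵥ y = y ⬝ᵥ M *ᵥ x := by
  rw [dotProduct_mulVec, dotProduct_comm, ← mulVec_transpose,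
    ← conjTranspose_eq_transpose_of_trivial, hM.eq]

lemma PosSemidef.convexOn_dotProduct_mulVec {M : Matrix ι ι ℝ} (hM : M.PosSemidef) :
    ConvexOn ℝ univ (fun x : ι → ℝ => x ⬝ᵥ M *ᵥ x) := by
  refine ⟨convex_univ, fun p _ q _ a b ha hb hab => ?_⟩
  have hpq := hM.dotProduct_mulVec_nonneg (p - q)
  obtain rfl : b = 1 - a := by linarith
  simp only [star_trivial, smul_eq_mul, mulVec_add, mulVec_sub, mulVec_smul, dotProduct_add,
    dotProduct_sub, add_dotProduct, sub_dotProduct, dotProduct_smul, smul_dotProduct,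
    hM.1.dotProduct_mulVec_comm q p] at hpq ⊢
  nlinarith [mul_nonneg (mul_nonneg ha hb) hpq]

lemma PosSemidef.convexOn_inv_mul_dotProduct_mulVec {M : Matrix ι ι ℝ} (hM : M.PosSemidef) :
    ConvexOn ℝ (Ioi 0 ×ˢ univ) (fun z : ℝ × (ι → ℝ) => z.1⁻¹ * (z.2 ⬝ᵥ M *ᵥ z.2)) :=
  hM.convexOn_dotProduct_mulVec.perspective.congr fun z hz => by
    have : z.1 ≠ 0 := (mem_Ioi.mp hz.1).ne'
    simp only [mulVec_smul, dotProduct_smul, smul_dotProduct, smul_eq_mul]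
    field_simp

lemma concaveOn_of_forall_concaveOn_dotProduct_mulVec {E : Type*} [AddCommGroup E] [Module ℝ E]
    {S : Set E} {F : E → Matrix ι ι ℝ} (hF : ∀ w ∈ S, (F w).IsHermitian)
    (h : ∀ x, ConcaveOn ℝ S (fun w => x ⬝ᵥ F w *ᵥ x)) : ConcaveOn ℝ S F := by
  refine ⟨(h 0).1, fun s hs t ht a b ha hb hab => le_iff.mpr ?_⟩
  have hself : ∀ c : ℝ, IsSelfAdjoint c := fun c => IsSelfAdjoint.all c
  refine .of_dotProduct_mulVec_nonneg ((hF _ ((h 0).1 hs ht ha hb hab)).sub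
    (((hF s hs).smul (hself a)).add ((hF t ht).smul (hself b)))) fun x => ?_
  simpa only [star_trivial, sub_mulVec, add_mulVec, smul_mulVec, dotProduct_sub, dotProduct_add,
    dotProduct_smul, sub_nonneg] using (h x).2 hs ht ha hb hab

variable [DecidableEq ι]

lemma PosDef.two_mul_dotProduct_sub_le {A : Matrix ι ι ℝ} (hA : A.PosDef) (x y : ι → ℝ) :
    2 * (x ⬝ᵥ y) - y ⬝ᵥ A *ᵥ y ≤ 2 * (x ⬝ᵥ A⁻¹ *ᵥ x) - (A⁻¹ *ᵥ x) ⬝ᵥ A *ᵥ (A⁻¹ *ᵥ x) := by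
  have hx : A *ᵥ (A⁻¹ *ᵥ x) = x := by
    rw [mulVec_mulVec, mul_nonsing_inv _ ((isUnit_iff_isUnit_det A).mp hA.isUnit), one_mulVec]
  have hcross : (A⁻¹ *ᵥ x) ⬝ᵥ A *ᵥ y = x ⬝ᵥ y := by
    rw [hA.1.dotProduct_mulVec_comm, hx, dotProduct_comm]
  have h := hA.posSemidef.dotProduct_mulVec_nonneg (A⁻¹ *ᵥ x - y)
  simp only [star_trivial, mulVec_sub, dotProduct_sub, sub_dotProduct, hx, hcross] at h
  rw [dotProduct_comm (A⁻¹ *ᵥ x) x, dotProduct_comm y x] at h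
  rw [hx, dotProduct_comm (A⁻¹ *ᵥ x) x]
  linarith

lemma concaveOn_dotProduct_inv_smul_add_mulVec {D E : Matrix ι ι ℝ} (hD : D.PosSemidef)
    (hE : E.PosSemidef) {S : Set ℝ} (hS : Convex ℝ S) (hS0 : S ⊆ Ioi 0)
    (hpd : ∀ w ∈ S, ((1 / w) • D + E).PosDef) (x : ι → ℝ) :
    ConcaveOn ℝ S (fun w => x ⬝ᵥ ((1 / w) • D + E)⁻¹ *ᵥ x) := by
  set φ : ℝ × (ι → ℝ) → ℝ := fun z => 2 * (x ⬝ᵥ z.2) - z.2 ⬝ᵥ ((1 / z.1) • D + E) *ᵥ z.2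
  have hlin : ConcaveOn ℝ (Ioi 0 ×ˢ univ) (fun z : ℝ × (ι → ℝ) => 2 * (x ⬝ᵥ z.2)) :=
    ((2 : ℝ) • (dotProductBilin ℝ ℝ x ∘ₗ LinearMap.snd ℝ ℝ (ι → ℝ))).concaveOn
      ((convex_Ioi 0).prod convex_univ)
  have hφ : ConcaveOn ℝ (Ioi 0 ×ˢ univ) φ :=
    ((hlin.sub hD.convexOn_inv_mul_dotProduct_mulVec).sub
      ((hE.convexOn_dotProduct_mulVec.comp_linearMap (LinearMap.snd ℝ ℝ (ι → ℝ))).subset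
        (subset_univ _) ((convex_Ioi 0).prod convex_univ))).congr fun z _ => by
      simp only [φ, Pi.sub_apply, Function.comp_apply, LinearMap.snd_apply, add_mulVec,
        smul_mulVec, dotProduct_add, dotProduct_smul, smul_eq_mul, one_div]
      ring
  refine ((hφ.subset (prod_mono hS0 subset_rfl) (hS.prod convex_univ)).apply_maximizer
    (fun w => ((1 / w) • D + E)⁻¹ *ᵥ x)
    fun w hw z => (hpd w hw).two_mul_dotProduct_sub_le x z).congr fun w hw => ?_
  have hx : ((1 / w) • D + E) *ᵥ (((1 / w) • D + E)⁻¹ *ᵥ x) = x := by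
    rw [mulVec_mulVec, mul_nonsing_inv _ ((isUnit_iff_isUnit_det _).mp (hpd w hw).isUnit),
      one_mulVec]
  simp only [φ, hx, dotProduct_comm _ x]
  ring

lemma concaveOn_inv_smul_add {D E : Matrix ι ι ℝ} (hD : D.PosSemidef) (hE : E.PosSemidef)
    {S : Set ℝ} (hS : Convex ℝ S) (hS0 : S ⊆ Ioi 0) (hpd : ∀ w ∈ S, ((1 / w) • D + E).PosDef) :
    ConcaveOn ℝ S (fun w => ((1 / w) • D + E)⁻¹) :=
  concaveOn_of_forall_concaveOn_dotProduct_mulVec (fun w hw => (hpd w hw).inv.1)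
    (concaveOn_dotProduct_inv_smul_add_mulVec hD hE hS hS0 hpd)

lemma IsHermitian.det_cfc {C : Matrix ι ι ℝ} (hC : C.IsHermitian) (f : ℝ → ℝ) :
    (cfc f C).det = ∏ i, f (hC.eigenvalues i) := by
  rw [hC.cfc_eq, IsHermitian.cfc, Unitary.conjStarAlgAut_apply, det_mul_right_comm,
    Unitary.mul_star_self_of_mem hC.eigenvectorUnitary.2, one_mul, det_diagonal]
  rfl

lemma IsHermitian.det_smul_one_add_smul {C : Matrix ι ι ℝ} (hC : C.IsHermitian) (a b : ℝ) :
    (a • (1 : Matrix ι ι ℝ) + b • C).det = ∏ i, (a + b * hC.eigenvalues i) := by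
  have hcfc : cfc (fun x => a + b * x) C = a • (1 : Matrix ι ι ℝ) + b • C := by
    rw [cfc_add .., cfc_const .., cfc_const_mul .., cfc_id' ..]
    simp [Algebra.algebraMap_eq_smul_one]
  rw [← hcfc, hC.det_cfc]

/-- The `μ i` are the eigenvalues of `A^(-1/2) B A^(-1/2)`. -/
lemma PosDef.exists_det_smul_add_smul {A B : Matrix ι ι ℝ} (hA : A.PosDef) (hB : B.PosSemidef) :
    ∃ μ : ι → ℝ, (∀ i, 0 ≤ μ i) ∧
      ∀ a b : ℝ, (a • A + b • B).det = A.det * ∏ i, (a + b * μ i) := by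
  set R := CFC.sqrt A
  have hRR : R * R = A := CFC.sqrt_mul_sqrt_self A hA.posSemidef.nonneg
  have hR : IsUnit R.det :=
    (isUnit_iff_isUnit_det R).mp ((CFC.isUnit_sqrt_iff A hA.posSemidef.nonneg).mpr hA.isUnit)
  have hC : (R⁻¹ * B * R⁻¹).PosSemidef := by
    have hRH : R⁻¹ᴴ = R⁻¹ := (CFC.sqrt_nonneg A).posSemidef.1.inv.eq
    simpa only [hRH] using hB.conjTranspose_mul_mul_same R⁻¹
  refine ⟨hC.1.eigenvalues, hC.eigenvalues_nonneg, fun a b => ?_⟩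
  have hsplit : a • A + b • B = R * (a • 1 + b • (R⁻¹ * B * R⁻¹)) * R := by
    simp only [mul_add, add_mul, mul_smul_comm, smul_mul_assoc, mul_one, hRR, mul_assoc,
      nonsing_inv_mul R hR, mul_nonsing_inv_cancel_left _ _ hR]
  rw [hsplit, det_mul, det_mul, hC.1.det_smul_one_add_smul, ← hRR, det_mul]
  ring

lemma PosSemidef.det_le_det_of_le {A B : Matrix ι ι ℝ} (hA : A.PosSemidef) (hAB : A ≤ B) :
    A.det ≤ B.det := by
  by_cases hA' : A.PosDef
  · obtain ⟨μ, hμ, hdet⟩ := hA'.exists_det_smul_add_smul (le_iff.mp hAB)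
    have hB : B.det = A.det * ∏ i, (1 + μ i) := by simpa using hdet 1 1
    rw [hB]
    exact le_mul_of_one_le_right hA'.det_pos.le
      (Finset.one_le_prod fun i _ => le_add_of_nonneg_right (hμ i))
  · have hB : B.PosSemidef := by simpa using hA.add (le_iff.mp hAB)
    have hA0 : A.det = 0 := not_not.mp (mt hA.posDef_iff_det_ne_zero.mpr hA')
    exact hA0 ▸ hB.det_nonneg

lemma PosDef.det_rpow_mul_det_rpow_le {A B : Matrix ι ι ℝ} (hA : A.PosDef) (hB : B.PosSemidef)
    {a b : ℝ} (ha : 0 ≤ a) (hb : 0 ≤ b) (hab : a + b = 1) :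
    A.det ^ a * B.det ^ b ≤ (a • A + b • B).det := by
  obtain ⟨μ, hμ, hdet⟩ := hA.exists_det_smul_add_smul hB
  have hB' : B.det = A.det * ∏ i, μ i := by simpa using hdet 0 1
  have hApos := hA.det_pos
  rw [hB', hdet a b, Real.mul_rpow hApos.le (Finset.prod_nonneg fun i _ => hμ i), ← mul_assoc,
    ← Real.rpow_add hApos, hab, Real.rpow_one, ← Real.finsetProd_rpow _ _ fun i _ => hμ i]
  refine mul_le_mul_of_nonneg_left
    (Finset.prod_le_prod (fun i _ => Real.rpow_nonneg (hμ i) b) fun i _ => ?_) hApos.le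
  simpa using Real.geom_mean_le_arith_mean2_weighted ha hb zero_le_one (hμ i) hab

end Matrix

theorem ConcaveOn.convexOn_det_inv {ι E : Type*} [Fintype ι] [DecidableEq ι] [AddCommGroup E]
    [Module ℝ E] {S : Set E} {F : E → Matrix ι ι ℝ} (hF : ConcaveOn ℝ S F)
    (hpd : ∀ w ∈ S, (F w).PosDef) : ConvexOn ℝ S (fun w => (F w)⁻¹.det) := by
  refine ⟨hF.1, fun s hs t ht a b ha hb hab => ?_⟩
  have hs' := (hpd s hs).det_pos
  have ht' := (hpd t ht).det_pos
  simp only [det_nonsing_inv, Ring.inverse_eq_inv', smul_eq_mul]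
  calc (F (a • s + b • t)).det⁻¹ ≤ ((F s).det ^ a * (F t).det ^ b)⁻¹ := by
        have hcomb : (a • F s + b • F t).PosSemidef :=
          ((hpd s hs).posSemidef.smul ha).add ((hpd t ht).posSemidef.smul hb)
        exact inv_anti₀ (by positivity) (((hpd s hs).det_rpow_mul_det_rpow_le
          (hpd t ht).posSemidef ha hb hab).trans (hcomb.det_le_det_of_le (hF.2 hs ht ha hb hab)))
    _ = (F s).det⁻¹ ^ a * (F t).det⁻¹ ^ b := by
        rw [mul_inv, Real.inv_rpow hs'.le, Real.inv_rpow ht'.le]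
    _ ≤ a * (F s).det⁻¹ + b * (F t).det⁻¹ :=
        Real.geom_mean_le_arith_mean2_weighted ha hb (by positivity) (by positivity) hab

theorem split_cif_det_convex_general (n : ℕ)
    (P1d P1i P2d P2i : Matrix (Fin n) (Fin n) ℝ)
    (hP1d : P1d.PosSemidef) (hP1i : P1i.PosSemidef)
    (hP2d : P2d.PosSemidef) (hP2i : P2i.PosSemidef)
    (hpos : ∀ w ∈ Set.Ioo (0 : ℝ) 1,
      ((1 / w) • P1d + P1i).PosDef ∧ ((1 / (1 - w)) • P2d + P2i).PosDef) :
    ConvexOn ℝ (Set.Ioo (0 : ℝ) 1)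
      (fun w => ((((1 / w) • P1d + P1i)⁻¹ + ((1 / (1 - w)) • P2d + P2i)⁻¹)⁻¹).det) := by
  have hreflect : ∀ w ∈ Ioo (0 : ℝ) 1, 1 - w ∈ Ioo (0 : ℝ) 1 :=
    fun w hw => ⟨by linarith [hw.2], by linarith [hw.1]⟩
  have hconc₁ : ConcaveOn ℝ (Ioo (0 : ℝ) 1) (fun w => ((1 / w) • P1d + P1i)⁻¹) :=
    concaveOn_inv_smul_add hP1d hP1i (convex_Ioo 0 1) (fun w hw => hw.1)
      fun w hw => (hpos w hw).1
  have hconc_inv₂ : ConcaveOn ℝ (Ioo (0 : ℝ) 1) (fun u => ((1 / u) • P2d + P2i)⁻¹) :=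
    concaveOn_inv_smul_add hP2d hP2i (convex_Ioo 0 1) (fun w hw => hw.1)
      fun u hu => by simpa using (hpos (1 - u) (hreflect u hu)).2
  have hconc₂ : ConcaveOn ℝ (Ioo (0 : ℝ) 1) (fun w => ((1 / (1 - w)) • P2d + P2i)⁻¹) := by
    refine ⟨convex_Ioo 0 1, fun s hs t ht a b ha hb hab => ?_⟩
    have hcomb : 1 - (a • s + b • t) = a • (1 - s) + b • (1 - t) := by
      simp only [smul_eq_mul]
      linear_combination -hab
    simpa only [hcomb] using hconc_inv₂.2 (hreflect s hs) (hreflect t ht) ha hb hab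
  exact (hconc₁.add hconc₂).convexOn_det_inv fun w hw => (hpos w hw).1.inv.add (hpos w hw).2.inv

/-- The function `w ↦ det P(w)` for the split CIF is convex on `(0,1)`. -/
theorem split_cif_det_convex (n : ℕ) (hn : 0 < n)
    (P1d P1i P2d P2i : Matrix (Fin n) (Fin n) ℝ)
    (hP1d : P1d.PosSemidef) (hP1i : P1i.PosSemidef)
    (hP2d : P2d.PosSemidef) (hP2i : P2i.PosSemidef)
    (hpos : ∀ w ∈ Set.Ioo (0 : ℝ) 1,
      ((1 / w) • P1d + P1i).PosDef ∧ ((1 / (1 - w)) • P2d + P2i).PosDef) :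
    ConvexOn ℝ (Set.Ioo (0 : ℝ) 1)
      (fun w => ((((1 / w) • P1d + P1i)⁻¹ + ((1 / (1 - w)) • P2d + P2i)⁻¹)⁻¹).det) :=
  split_cif_det_convex_general n P1d P1i P2d P2i hP1d hP1i hP2d hP2i hpos
end

section
/- Let n be a positive integer and let P1d, P1i, P2d, P2i be n×n real symmetric positive semidefinite matrices. For w ∈ (0,1) define P₁(w) = (1/w)·P1d + P1i, P₂(w) = (1/(1−w))·P2d + P2i, and P(w) = (P₁(w)⁻¹ + P₂(w)⁻¹)⁻¹. Assume P₁(w) and P₂(w) are positive definite for every w ∈ (0,1). Then for every w ∈ (0,1), the second derivative of the function w ↦ log det(P(w)) at w is nonnegative. -/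
/-!
Write `P(w) = Q(w)⁻¹` with `Q(w) = P₁(w)⁻¹ + P₂(w)⁻¹`, so that `log det P(w) = -log det Q(w)`.
For positive semidefinite `A`, `B` the map `w ↦ (A / w + B)⁻¹` is concave in the Loewner order:
test it against `x` and use `xᵀ M⁻¹ x = max_y (2 xᵀ y - yᵀ M y)` together with the joint convexity
of the perspective `(y, w) ↦ yᵀ A y / w`. Hence `Q` is Loewner-concave on `(0, 1)`, and since
`log det` is monotone and concave on positive definite matrices, `w ↦ log det P(w)` is convex.
It is also differentiable, because `det Q = det (P₁ + P₂) / (det P₁ det P₂)` is built from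
determinants of matrices with differentiable entries. A differentiable convex function has a
monotone derivative, whose derivative is therefore nonnegative.
-/

open Matrix Set Filter Topology
open scoped MatrixOrder

namespace Matrix

variable {m : Type*}

theorem PosDef.smul_add_smul {A B : Matrix m m ℝ} (hA : A.PosDef) (hB : B.PosDef) {a b : ℝ}
    (ha : 0 ≤ a) (hb : 0 ≤ b) (hab : a + b = 1) : (a • A + b • B).PosDef := by
  rcases ha.eq_or_lt with rfl | ha
  · simpa [show b = 1 by linarith] using hB
  · exact (hA.smul ha).add_posSemidef (hB.posSemidef.smul hb)

variable [Fintype m]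

theorem IsHermitian.dotProduct_mulVec_comm_s2 {A : Matrix m m ℝ} (hA : A.IsHermitian) (x y : m → ℝ) :
    x ⬝ᵥ A *ᵥ y = y ⬝ᵥ A *ᵥ x := by
  rw [dotProduct_mulVec, ← mulVec_transpose, (isHermitian_iff_isSymm.mp hA).eq, dotProduct_comm]

theorem dotProduct_one_div_smul_add_mulVec (A B : Matrix m m ℝ) (w : ℝ) (y : m → ℝ) :
    y ⬝ᵥ ((1 / w) • A + B) *ᵥ y = y ⬝ᵥ A *ᵥ y / w + y ⬝ᵥ B *ᵥ y := by
  simp only [add_mulVec, smul_mulVec, dotProduct_add, dotProduct_smul, smul_eq_mul]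
  ring

/-- Joint convexity of the perspective `(y, w) ↦ yᵀ A y / w`: the gap is
`a b / (w w₁ w₂) · (w₂ y₁ - w₁ y₂)ᵀ A (w₂ y₁ - w₁ y₂)`. -/
theorem PosSemidef.dotProduct_mulVec_div_le {A : Matrix m m ℝ} (hA : A.PosSemidef) {w₁ w₂ a b : ℝ}
    (hw₁ : 0 < w₁) (hw₂ : 0 < w₂) (ha : 0 ≤ a) (hb : 0 ≤ b) (hab : a + b = 1) (y₁ y₂ : m → ℝ) :
    (a • y₁ + b • y₂) ⬝ᵥ A *ᵥ (a • y₁ + b • y₂) / (a * w₁ + b * w₂)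
      ≤ a * (y₁ ⬝ᵥ A *ᵥ y₁ / w₁) + b * (y₂ ⬝ᵥ A *ᵥ y₂ / w₂) := by
  have hw : 0 < a * w₁ + b * w₂ := by
    simpa using convex_Ioi (0 : ℝ) (mem_Ioi.mpr hw₁) (mem_Ioi.mpr hw₂) ha hb hab
  have hgap := hA.dotProduct_mulVec_nonneg (w₂ • y₁ - w₁ • y₂)
  have hsymm := hA.isHermitian.dotProduct_mulVec_comm_s2 y₂ y₁
  simp only [star_trivial, mulVec_add, mulVec_sub, mulVec_smul, add_dotProduct, sub_dotProduct,
    dotProduct_add, dotProduct_sub, smul_dotProduct, dotProduct_smul, smul_eq_mul, hsymm] at hgap ⊢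
  rw [div_le_iff₀ hw]
  have key : (a * (y₁ ⬝ᵥ A *ᵥ y₁ / w₁) + b * (y₂ ⬝ᵥ A *ᵥ y₂ / w₂)) * (a * w₁ + b * w₂) -
      (a * (a * (y₁ ⬝ᵥ A *ᵥ y₁) + b * (y₁ ⬝ᵥ A *ᵥ y₂)) +
        b * (a * (y₁ ⬝ᵥ A *ᵥ y₂) + b * (y₂ ⬝ᵥ A *ᵥ y₂)))
      = a * b / (w₁ * w₂) * (w₂ * (w₂ * (y₁ ⬝ᵥ A *ᵥ y₁) - w₁ * (y₁ ⬝ᵥ A *ᵥ y₂)) -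
        w₁ * (w₂ * (y₁ ⬝ᵥ A *ᵥ y₂) - w₁ * (y₂ ⬝ᵥ A *ᵥ y₂))) := by
    field_simp
    ring
  linarith [mul_nonneg (div_nonneg (mul_nonneg ha hb) (mul_pos hw₁ hw₂).le) hgap]

variable [DecidableEq m]

theorem det_inv_add_inv {K : Type*} [Field K] {A B : Matrix m m K} (hA : IsUnit A.det)
    (hB : IsUnit B.det) : (A⁻¹ + B⁻¹).det = (A + B).det / (A.det * B.det) := by
  have hfactor : A⁻¹ + B⁻¹ = A⁻¹ * (A + B) * B⁻¹ := by
    rw [Matrix.mul_add, nonsing_inv_mul _ hA, Matrix.add_mul, Matrix.one_mul, Matrix.mul_assoc,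
      mul_nonsing_inv _ hB, Matrix.mul_one, add_comm]
  rw [hfactor, det_mul, det_mul, det_nonsing_inv, det_nonsing_inv]
  simp only [Ring.inverse_eq_inv']
  ring

/-- No invertibility is needed: for singular `A` both sides are `0`. -/
theorem log_det_inv (A : Matrix m m ℝ) : Real.log A⁻¹.det = -Real.log A.det := by
  rw [det_nonsing_inv, Ring.inverse_eq_inv', Real.log_inv]

theorem PosDef.log_det_inv_add_inv {A B : Matrix m m ℝ} (hA : A.PosDef) (hB : B.PosDef) :
    Real.log (A⁻¹ + B⁻¹).det = Real.log (A + B).det - Real.log A.det - Real.log B.det := by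
  rw [det_inv_add_inv hA.det_pos.ne'.isUnit hB.det_pos.ne'.isUnit,
    Real.log_div (hA.add hB).det_pos.ne' (mul_pos hA.det_pos hB.det_pos).ne',
    Real.log_mul hA.det_pos.ne' hB.det_pos.ne']
  ring

theorem PosDef.exists_eq_star_mul_self {X : Matrix m m ℝ} (hX : X.PosDef) :
    ∃ S : Matrix m m ℝ, IsUnit S ∧ X = star S * S := by
  refine ⟨CFC.sqrt X, ?_, ?_⟩
  · have hdet : X.det = (CFC.sqrt X).det * (CFC.sqrt X).det := by
      rw [← det_mul, CFC.sqrt_mul_sqrt_self X hX.posSemidef.nonneg]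
    rw [isUnit_iff_isUnit_det]
    exact isUnit_of_mul_isUnit_left (hdet ▸ hX.det_pos.ne'.isUnit)
  · rw [(CFC.sqrt_nonneg X).isSelfAdjoint.star_eq, CFC.sqrt_mul_sqrt_self X hX.posSemidef.nonneg]

theorem IsHermitian.det_smul_one_add_smul_s2 {A : Matrix m m ℝ} (hA : A.IsHermitian) (a b : ℝ) :
    (a • (1 : Matrix m m ℝ) + b • A).det = ∏ i, (a + b * hA.eigenvalues i) := by
  have key : a • (1 : Matrix m m ℝ) + b • A =
      (hA.eigenvectorUnitary : Matrix m m ℝ) * diagonal (fun i => a + b * hA.eigenvalues i)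
        * (star hA.eigenvectorUnitary : Matrix m m ℝ) := by
    have hdiag : diagonal (fun i => a + b * hA.eigenvalues i)
        = a • (1 : Matrix m m ℝ) + b • diagonal hA.eigenvalues := by
      ext i j
      by_cases h : i = j <;> simp [diagonal, h]
    rw [hdiag]
    conv_lhs => rw [hA.spectral_theorem]
    simp only [Matrix.mul_add, Matrix.add_mul, Matrix.mul_smul, Matrix.smul_mul, Matrix.mul_one]
    rw [(mem_unitaryGroup_iff).mp hA.eigenvectorUnitary.2]
    simp [RCLike.ofReal_real_eq_id]
  rw [key, det_mul, det_mul, mul_comm, ← mul_assoc, ← det_mul,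
    (mem_unitaryGroup_iff').mp hA.eigenvectorUnitary.2, det_one, one_mul, det_diagonal]

theorem det_smul_add_smul_of_eq_star_mul_self {X Y S : Matrix m m ℝ} (hS : IsUnit S)
    (hX : X = star S * S) (hT : (star S⁻¹ * Y * S⁻¹).IsHermitian) (a b : ℝ) :
    (a • X + b • Y).det = X.det * ∏ i, (a + b * hT.eigenvalues i) := by
  have hSS : star S * star S⁻¹ = 1 := by
    rw [← star_mul, nonsing_inv_mul _ ((isUnit_iff_isUnit_det S).mp hS), star_one]
  have hY : Y = star S * (star S⁻¹ * Y * S⁻¹) * S := by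
    rw [← Matrix.mul_assoc, ← Matrix.mul_assoc, hSS, Matrix.one_mul, Matrix.mul_assoc,
      nonsing_inv_mul _ ((isUnit_iff_isUnit_det S).mp hS), Matrix.mul_one]
  have hcongr : a • X + b • Y = star S * (a • 1 + b • (star S⁻¹ * Y * S⁻¹)) * S := by
    conv_lhs => rw [hY, hX]
    simp only [Matrix.mul_add, Matrix.add_mul, Matrix.mul_smul, Matrix.smul_mul, Matrix.mul_one]
  rw [hcongr, det_mul, det_mul, hT.det_smul_one_add_smul_s2, hX, det_mul]
  ring

theorem PosDef.det_le_det_of_le {X Y : Matrix m m ℝ} (hX : X.PosDef) (hXY : X ≤ Y) :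
    X.det ≤ Y.det := by
  obtain ⟨S, hS, rfl⟩ := hX.exists_eq_star_mul_self
  have hT : (star S⁻¹ * (Y - star S * S) * S⁻¹).PosSemidef :=
    (isUnit_nonsing_inv_iff.mpr hS).posSemidef_star_left_conjugate_iff.mpr hXY
  have hdet := det_smul_add_smul_of_eq_star_mul_self hS rfl hT.isHermitian 1 1
  rw [one_smul, one_smul, add_sub_cancel] at hdet
  rw [hdet]
  refine le_mul_of_one_le_right hX.det_pos.le (Finset.one_le_prod fun i _ => ?_)
  linarith [hT.eigenvalues_nonneg i]

theorem PosDef.smul_log_det_add_smul_log_det_le {X Y : Matrix m m ℝ} (hX : X.PosDef)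
    (hY : Y.PosDef) {a b : ℝ} (ha : 0 ≤ a) (hb : 0 ≤ b) (hab : a + b = 1) :
    a * Real.log X.det + b * Real.log Y.det ≤ Real.log (a • X + b • Y).det := by
  obtain ⟨S, hS, rfl⟩ := hX.exists_eq_star_mul_self
  have hT : (star S⁻¹ * Y * S⁻¹).PosDef :=
    (isUnit_nonsing_inv_iff.mpr hS).posDef_star_left_conjugate_iff.mpr hY
  set ev := hT.isHermitian.eigenvalues
  have hev : ∀ i, 0 < ev i := hT.eigenvalues_pos
  have hdetY := det_smul_add_smul_of_eq_star_mul_self hS rfl hT.isHermitian 0 1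
  have hdet := det_smul_add_smul_of_eq_star_mul_self hS rfl hT.isHermitian a b
  simp only [zero_smul, one_smul, zero_add, one_mul] at hdetY
  have hlog : ∀ i, b * Real.log (ev i) ≤ Real.log (a + b * ev i) := fun i => by
    simpa using strictConcaveOn_log_Ioi.concaveOn.2 (mem_Ioi.mpr one_pos) (hev i) ha hb hab
  have hpos : ∀ i, 0 < a + b * ev i := fun i => by
    simpa using convex_Ioi (0 : ℝ) (mem_Ioi.mpr one_pos) (hev i) ha hb hab
  rw [hdet, hdetY, Real.log_mul hX.det_pos.ne' (Finset.prod_pos fun i _ => hpos i).ne',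
    Real.log_mul hX.det_pos.ne' (Finset.prod_pos fun i _ => hev i).ne',
    Real.log_prod fun i _ => (hpos i).ne', Real.log_prod fun i _ => (hev i).ne', mul_add,
    Finset.mul_sum]
  have hsum := Finset.sum_le_sum fun i (_ : i ∈ Finset.univ) => hlog i
  have hweights : a * Real.log (star S * S).det + b * Real.log (star S * S).det
      = Real.log (star S * S).det := by rw [← add_mul, hab, one_mul]
  linarith

theorem _root_.ConcaveOn.log_det {E : Type*} [AddCommMonoid E] [Module ℝ E] {s : Set E}
    {Q : E → Matrix m m ℝ} (hQ : ConcaveOn ℝ s Q) (hpd : ∀ x ∈ s, (Q x).PosDef) :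
    ConcaveOn ℝ s fun x => Real.log (Q x).det := by
  refine ⟨hQ.1, fun x hx y hy a b ha hb hab => ?_⟩
  have hmix := (hpd x hx).smul_add_smul (hpd y hy) ha hb hab
  calc a • Real.log (Q x).det + b • Real.log (Q y).det
      ≤ Real.log (a • Q x + b • Q y).det :=
        (hpd x hx).smul_log_det_add_smul_log_det_le (hpd y hy) ha hb hab
    _ ≤ Real.log (Q (a • x + b • y)).det :=
        Real.log_le_log hmix.det_pos (hmix.det_le_det_of_le (hQ.2 hx hy ha hb hab))

theorem PosDef.two_mul_dotProduct_sub_le_s2 {M : Matrix m m ℝ} (hM : M.PosDef) (x y : m → ℝ) :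
    2 * (x ⬝ᵥ y) - y ⬝ᵥ M *ᵥ y ≤ x ⬝ᵥ M⁻¹ *ᵥ x := by
  have hMM : M *ᵥ (M⁻¹ *ᵥ x) = x := by
    rw [mulVec_mulVec, mul_nonsing_inv _ hM.det_pos.ne'.isUnit, one_mulVec]
  have h := hM.posSemidef.dotProduct_mulVec_nonneg (y - M⁻¹ *ᵥ x)
  rw [star_trivial, mulVec_sub, hMM, sub_dotProduct, dotProduct_sub, dotProduct_sub,
    hM.isHermitian.dotProduct_mulVec_comm_s2 (M⁻¹ *ᵥ x) y, hMM, dotProduct_comm (M⁻¹ *ᵥ x) x,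
    dotProduct_comm y x] at h
  linarith

/-- Put `y = a y₁ + b y₂` with `yᵢ = Mᵢ⁻¹ x` into `xᵀ M⁻¹ x ≥ 2 xᵀ y - yᵀ M y` and bound `yᵀ M y`
by the perspective convexity, for both `A` and `B` (the latter with `w₁ = w₂ = 1`). -/
theorem smul_dotProduct_inv_mulVec_add_le {A B : Matrix m m ℝ} (hA : A.PosSemidef)
    (hB : B.PosSemidef) {w₁ w₂ a b : ℝ} (hw₁ : 0 < w₁) (hw₂ : 0 < w₂) (ha : 0 ≤ a) (hb : 0 ≤ b)
    (hab : a + b = 1) (h₁ : ((1 / w₁) • A + B).PosDef) (h₂ : ((1 / w₂) • A + B).PosDef)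
    (h : ((1 / (a * w₁ + b * w₂)) • A + B).PosDef) (x : m → ℝ) :
    a * (x ⬝ᵥ ((1 / w₁) • A + B)⁻¹ *ᵥ x) + b * (x ⬝ᵥ ((1 / w₂) • A + B)⁻¹ *ᵥ x)
      ≤ x ⬝ᵥ ((1 / (a * w₁ + b * w₂)) • A + B)⁻¹ *ᵥ x := by
  set y₁ := ((1 / w₁) • A + B)⁻¹ *ᵥ x
  set y₂ := ((1 / w₂) • A + B)⁻¹ *ᵥ x
  have hy₁ : y₁ ⬝ᵥ ((1 / w₁) • A + B) *ᵥ y₁ = x ⬝ᵥ y₁ := by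
    rw [mulVec_mulVec, mul_nonsing_inv _ h₁.det_pos.ne'.isUnit, one_mulVec, dotProduct_comm]
  have hy₂ : y₂ ⬝ᵥ ((1 / w₂) • A + B) *ᵥ y₂ = x ⬝ᵥ y₂ := by
    rw [mulVec_mulVec, mul_nonsing_inv _ h₂.det_pos.ne'.isUnit, one_mulVec, dotProduct_comm]
  have hA' := hA.dotProduct_mulVec_div_le hw₁ hw₂ ha hb hab y₁ y₂
  have hB' := hB.dotProduct_mulVec_div_le one_pos one_pos ha hb hab y₁ y₂
  have hvar := h.two_mul_dotProduct_sub_le_s2 x (a • y₁ + b • y₂)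
  rw [dotProduct_one_div_smul_add_mulVec] at hy₁ hy₂ hvar
  rw [dotProduct_add, dotProduct_smul, dotProduct_smul, smul_eq_mul, smul_eq_mul] at hvar
  simp only [mul_one, hab, div_one] at hB'
  linear_combination hvar + hA' + hB' + a * hy₁ + b * hy₂

theorem concaveOn_inv_one_div_smul_add {A B : Matrix m m ℝ} (hA : A.PosSemidef)
    (hB : B.PosSemidef) {s : Set ℝ} (hs : Convex ℝ s) (hs₀ : s ⊆ Ioi 0)
    (hpd : ∀ w ∈ s, ((1 / w) • A + B).PosDef) :
    ConcaveOn ℝ s fun w => ((1 / w) • A + B)⁻¹ := by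
  refine ⟨hs, fun w₁ hw₁ w₂ hw₂ a b ha hb hab => ?_⟩
  have hw := hs hw₁ hw₂ ha hb hab
  simp only [smul_eq_mul] at hw ⊢
  rw [le_iff]
  refine PosSemidef.of_dotProduct_mulVec_nonneg ?_ fun x => ?_
  · exact (hpd _ hw).inv.isHermitian.sub
      (((hpd _ hw₁).inv.posSemidef.smul ha).add ((hpd _ hw₂).inv.posSemidef.smul hb)).isHermitian
  · have := smul_dotProduct_inv_mulVec_add_le hA hB (hs₀ hw₁) (hs₀ hw₂) ha hb hab (hpd _ hw₁)
      (hpd _ hw₂) (hpd _ hw) x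
    simp only [star_trivial, sub_mulVec, add_mulVec, smul_mulVec, dotProduct_sub, dotProduct_add,
      dotProduct_smul, smul_eq_mul]
    linarith

end Matrix

section

variable {m : Type*} [Fintype m] [DecidableEq m]

theorem DifferentiableAt.matrix_det {𝕜 E : Type*} [NontriviallyNormedField 𝕜]
    [NormedAddCommGroup E] [NormedSpace 𝕜 E] {f : E → Matrix m m 𝕜} {x : E}
    (hf : ∀ i j, DifferentiableAt 𝕜 (fun y => f y i j) x) :
    DifferentiableAt 𝕜 (fun y => (f y).det) x := by
  simp only [det_apply']
  fun_prop

theorem DifferentiableAt.log_det_inv_add_inv {f g : ℝ → Matrix m m ℝ} {x : ℝ}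
    (hf : ∀ i j, DifferentiableAt ℝ (fun y => f y i j) x)
    (hg : ∀ i j, DifferentiableAt ℝ (fun y => g y i j) x)
    (hpd : ∀ᶠ y in 𝓝 x, (f y).PosDef ∧ (g y).PosDef) :
    DifferentiableAt ℝ (fun y => Real.log ((f y)⁻¹ + (g y)⁻¹)⁻¹.det) x := by
  have hsum : ∀ i j, DifferentiableAt ℝ (fun y => (f y + g y) i j) x := fun i j =>
    (hf i j).add (hg i j)
  have heq : (fun y => Real.log (f y + g y).det - Real.log (f y).det - Real.log (g y).det)
      =ᶠ[𝓝 x] fun y => -Real.log ((f y)⁻¹ + (g y)⁻¹)⁻¹.det := by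
    filter_upwards [hpd] with y ⟨hfy, hgy⟩
    rw [log_det_inv, neg_neg, hfy.log_det_inv_add_inv hgy]
  obtain ⟨hfx, hgx⟩ := hpd.self_of_nhds
  have hdiff := (((DifferentiableAt.matrix_det hsum).log (hfx.add hgx).det_pos.ne').sub
    ((DifferentiableAt.matrix_det hf).log hfx.det_pos.ne')).sub
    ((DifferentiableAt.matrix_det hg).log hgx.det_pos.ne')
  simpa using (hdiff.congr_of_eventuallyEq heq.symm).neg

end

theorem ConcaveOn.comp_one_sub {β : Type*} [AddCommMonoid β] [PartialOrder β] [SMul ℝ β]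
    {f : ℝ → β} (hf : ConcaveOn ℝ (Ioo 0 1) f) : ConcaveOn ℝ (Ioo 0 1) fun x => f (1 - x) := by
  refine ⟨convex_Ioo 0 1, fun x hx y hy a b ha hb hab => ?_⟩
  have hreflect : ∀ z ∈ Ioo (0 : ℝ) 1, 1 - z ∈ Ioo (0 : ℝ) 1 := fun z hz =>
    ⟨by linarith [hz.2], by linarith [hz.1]⟩
  convert hf.2 (hreflect x hx) (hreflect y hy) ha hb hab using 2
  simp only [smul_eq_mul]
  linear_combination -hab

theorem ConvexOn.deriv_deriv_nonneg {f : ℝ → ℝ} {s : Set ℝ} {x : ℝ} (hf : ConvexOn ℝ s f)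
    (hs : IsOpen s) (hd : ∀ y ∈ s, DifferentiableAt ℝ f y) (hx : x ∈ s) :
    0 ≤ deriv (deriv f) x := by
  rw [← derivWithin_of_isOpen hs hx]
  exact (hf.monotoneOn_deriv hd).derivWithin_nonneg

theorem split_cif_log_det_second_deriv_nonneg_general (n : ℕ)
    (P1d P1i P2d P2i : Matrix (Fin n) (Fin n) ℝ)
    (hP1d : P1d.PosSemidef) (hP1i : P1i.PosSemidef)
    (hP2d : P2d.PosSemidef) (hP2i : P2i.PosSemidef)
    (hpos : ∀ w ∈ Set.Ioo (0 : ℝ) 1,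
      ((1 / w) • P1d + P1i).PosDef ∧ ((1 / (1 - w)) • P2d + P2i).PosDef) :
    ∀ w ∈ Set.Ioo (0 : ℝ) 1,
      0 ≤ deriv (deriv (fun x =>
        Real.log ((((1 / x) • P1d + P1i)⁻¹ + ((1 / (1 - x)) • P2d + P2i)⁻¹)⁻¹).det)) w := by
  intro w hw
  have hconcave₁ : ConcaveOn ℝ (Ioo 0 1) fun x : ℝ => ((1 / x) • P1d + P1i)⁻¹ :=
    concaveOn_inv_one_div_smul_add hP1d hP1i (convex_Ioo 0 1) Ioo_subset_Ioi_self
      fun x hx => (hpos x hx).1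
  have hconcave₂ : ConcaveOn ℝ (Ioo 0 1) fun x : ℝ => ((1 / (1 - x)) • P2d + P2i)⁻¹ :=
    ConcaveOn.comp_one_sub <| concaveOn_inv_one_div_smul_add hP2d hP2i (convex_Ioo 0 1)
      Ioo_subset_Ioi_self fun x hx => by
        simpa using (hpos (1 - x) ⟨by linarith [hx.2], by linarith [hx.1]⟩).2
  have hconvex : ConvexOn ℝ (Ioo 0 1) fun x : ℝ =>
      Real.log ((((1 / x) • P1d + P1i)⁻¹ + ((1 / (1 - x)) • P2d + P2i)⁻¹)⁻¹).det := by
    simp only [log_det_inv]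
    exact ((hconcave₁.add hconcave₂).log_det fun x hx =>
      (hpos x hx).1.inv.add (hpos x hx).2.inv).neg
  refine hconvex.deriv_deriv_nonneg isOpen_Ioo (fun x hx => ?_) hw
  refine DifferentiableAt.log_det_inv_add_inv (fun i j => ?_) (fun i j => ?_)
    (eventually_of_mem (isOpen_Ioo.mem_nhds hx) hpos)
  all_goals
    simp only [Matrix.add_apply, Matrix.smul_apply, smul_eq_mul]
    fun_prop (disch := linarith [hx.1, hx.2])

/-- The second derivative of `w ↦ log det P(w)` is nonnegative on `(0,1)`. -/
theorem split_cif_log_det_second_deriv_nonneg (n : ℕ) (hn : 0 < n)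
    (P1d P1i P2d P2i : Matrix (Fin n) (Fin n) ℝ)
    (hP1d : P1d.PosSemidef) (hP1i : P1i.PosSemidef)
    (hP2d : P2d.PosSemidef) (hP2i : P2i.PosSemidef)
    (hpos : ∀ w ∈ Set.Ioo (0 : ℝ) 1,
      ((1 / w) • P1d + P1i).PosDef ∧ ((1 / (1 - w)) • P2d + P2i).PosDef) :
    ∀ w ∈ Set.Ioo (0 : ℝ) 1,
      0 ≤ deriv (deriv (fun x =>
        Real.log ((((1 / x) • P1d + P1i)⁻¹ + ((1 / (1 - x)) • P2d + P2i)⁻¹)⁻¹).det)) w :=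
  split_cif_log_det_second_deriv_nonneg_general n P1d P1i P2d P2i hP1d hP1i hP2d hP2i hpos
end

section
/- (Lemma 2, second derivative of log-determinant.) Let M : ℝ → Matrix n n ℝ be twice differentiable at a point w with M(w′) positive definite for all w′ in a neighborhood of w. Then d²/dw² [log det(M(w))] = tr(−M(w)⁻¹ M′(w) M(w)⁻¹ M′(w) + M(w)⁻¹ M″(w)), where M′ and M″ denote the first and second derivatives of M. -/
/-!
Jacobi's formula `D det (A) H = det A * tr (A⁻¹ H)` at an invertible `A` follows from
`det (A + r H) = det A * det (1 + r A⁻¹ H)` and the expansion `det (1 + r K) = 1 + r tr K + O(r²)`.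
Hence `(log det M)' = tr (M⁻¹ M')` near `w`; differentiating once more, with
`(M⁻¹)' = -M⁻¹ M' M⁻¹` and the product rule, gives the formula.
-/

-- The Frobenius group and space instances are registered again, after the ring ones, so that
-- instance search keeps preferring them, as it does in the statement of the theorem.
attribute [local instance] Matrix.frobeniusNormedRing Matrix.frobeniusNormedAlgebra
  Matrix.frobeniusNormedAddCommGroup Matrix.frobeniusNormedSpace

open Matrix Polynomial Topology

section

variable {𝕜 n : Type*} [RCLike 𝕜] [Fintype n] [DecidableEq n]

namespace Matrix

theorem differentiable_det : Differentiable 𝕜 (det : Matrix n n 𝕜 → 𝕜) := by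
  have hentry (i j : n) : Differentiable 𝕜 fun A : Matrix n n 𝕜 => A i j :=
    (entryLinearMap 𝕜 𝕜 i j).toContinuousLinearMap.differentiable
  simp_rw [_root_.funext det_apply]
  fun_prop

theorem hasDerivAt_det_one_add_smul (K : Matrix n n 𝕜) :
    HasDerivAt (fun r : 𝕜 => det (1 + r • K)) (trace K) 0 := by
  have := (det (1 + (X : 𝕜[X]) • K.map C)).hasDerivAt 0
  rw [derivative_det_one_add_X_smul] at this
  convert this using 2 with r
  simp [eval_det, ← smul_eq_mul_diagonal]

theorem fderiv_det_apply {A : Matrix n n 𝕜} (hA : IsUnit A) (H : Matrix n n 𝕜) :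
    fderiv 𝕜 det A H = A.det * trace (A⁻¹ * H) := by
  have hline : HasDerivAt (fun r : 𝕜 => A + r • H) H 0 := by
    have := ((hasDerivAt_id (0 : 𝕜)).smul_const H).const_add A
    simp only [id, one_smul] at this
    exact this
  have hdet_line : HasDerivAt (fun r : 𝕜 => det (A + r • H)) (fderiv 𝕜 det A H) 0 :=
    (differentiable_det _).hasFDerivAt.comp_hasDerivAt_of_eq 0 hline (by simp)
  have hfactor : (fun r : 𝕜 => det (A + r • H)) = fun r => A.det * det (1 + r • (A⁻¹ * H)) := by
    funext r
    rw [← det_mul, mul_add, mul_one, mul_smul_comm,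
      mul_nonsing_inv_cancel_left _ _ ((isUnit_iff_isUnit_det A).mp hA)]
  rw [hfactor] at hdet_line
  exact hdet_line.unique ((hasDerivAt_det_one_add_smul _).const_mul _)

end Matrix

section MatrixValued

variable {M : 𝕜 → Matrix n n 𝕜} {M' : Matrix n n 𝕜} {x : 𝕜}

omit [DecidableEq n] in
theorem HasDerivAt.matrix_trace (h : HasDerivAt M M' x) :
    HasDerivAt (fun t => (M t).trace) M'.trace x :=
  (traceLinearMap n 𝕜 𝕜).toContinuousLinearMap.hasFDerivAt.comp_hasDerivAt x h

theorem HasDerivAt.matrix_det (h : HasDerivAt M M' x) (hx : IsUnit (M x)) :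
    HasDerivAt (fun t => (M t).det) ((M x).det * trace ((M x)⁻¹ * M')) x := by
  rw [← fderiv_det_apply hx]
  exact (differentiable_det (M x)).hasFDerivAt.comp_hasDerivAt x h

theorem HasDerivAt.matrix_inv (h : HasDerivAt M M' x) (hx : IsUnit (M x)) :
    HasDerivAt (fun t => (M t)⁻¹) (-((M x)⁻¹ * M' * (M x)⁻¹)) x := by
  have := (hasFDerivAt_ringInverse (𝕜 := 𝕜) hx.unit).comp_hasDerivAt x h
  simp only [Function.comp_def, coe_units_inv, IsUnit.unit_spec,
    ← nonsing_inv_eq_ringInverse] at this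
  exact this

end MatrixValued

theorem HasDerivAt.log_det {M : ℝ → Matrix n n ℝ} {M' : Matrix n n ℝ} {x : ℝ}
    (h : HasDerivAt M M' x) (hx : (M x).det ≠ 0) :
    HasDerivAt (fun t => Real.log (M t).det) (trace ((M x)⁻¹ * M')) x := by
  have := (h.matrix_det ((isUnit_iff_isUnit_det _).mpr hx.isUnit)).log hx
  rwa [mul_div_cancel_left₀ _ hx] at this

end

/-- Lemma 2 (second derivative of the log-determinant): if `M` is twice differentiable at `w`
and positive definite near `w`, then
`d²/dw² log det M = tr (−M⁻¹ M′ M⁻¹ M′ + M⁻¹ M″)` at `w`. -/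
theorem second_deriv_log_det (n : ℕ) (M : ℝ → Matrix (Fin n) (Fin n) ℝ) (w : ℝ)
    (hM1 : ∀ᶠ x in nhds w, DifferentiableAt ℝ M x)
    (hM2 : DifferentiableAt ℝ (deriv M) w)
    (hpos : ∀ᶠ x in nhds w, (M x).PosDef) :
    deriv (deriv (fun x => Real.log (M x).det)) w =
      Matrix.trace (-((M w)⁻¹ * deriv M w * (M w)⁻¹ * deriv M w)
        + (M w)⁻¹ * deriv (deriv M) w) := by
  have hderiv_log_det :
      deriv (fun x => Real.log (M x).det) =ᶠ[𝓝 w] fun x => trace ((M x)⁻¹ * deriv M x) := by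
    filter_upwards [hM1, hpos] with x hx hx_pos
    exact (hx.hasDerivAt.log_det hx_pos.det_pos.ne').deriv
  have hinv := hM1.self_of_nhds.hasDerivAt.matrix_inv hpos.self_of_nhds.isUnit
  rw [hderiv_log_det.deriv_eq, (hinv.fun_mul hM2.hasDerivAt).matrix_trace.deriv, neg_mul]
  -- the sides differ only in the (definitionally equal) Frobenius and default matrix instances
  rfl
end

section
/- (Lemma 5, key trace inequality.) Let X, Y, Z be n×n real symmetric matrices with X positive definite, Y − X positive semidefinite, Z positive semidefinite, and X − Z positive semidefinite. Then tr(2·X⁻¹Z − 2·Y⁻¹Z − X⁻¹ZX⁻¹Z + Y⁻¹ZY⁻¹Z) ≥ tr((X⁻¹ − Y⁻¹)·Z·(X⁻¹ − Y⁻¹)·Z). -/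
/-!
The right-hand side minus the left-hand side equals `2 tr((X⁻¹ - Y⁻¹)(Z - Z X⁻¹ Z))`, the trace
of a product of two positive semidefinite matrices. For `0 ≤ Z ≤ A` with `A > 0`, the matrix
`Z - Z A⁻¹ Z` is the Schur complement of `A` in the block matrix
`[[A, Z], [Z, Z]] = [[A - Z, 0], [0, 0]] + [[Z, Z], [Z, Z]] ≥ 0`. With `D = Y - X` the identity
`X⁻¹ - Y⁻¹ = X⁻¹ (D - D Y⁻¹ D) X⁻¹` and `0 ≤ D ≤ Y` turn this into `Y⁻¹ ≤ X⁻¹`.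
-/

open Matrix

namespace Matrix

section Field

variable {n K : Type*} [Fintype n] [DecidableEq n] [Field K] [PartialOrder K] [StarRing K]
  [StarOrderedRing K]

lemma PosDef.posSemidef_sub_mul_inv_mul {A Z : Matrix n n K} (hA : A.PosDef)
    (hZ : Z.PosSemidef) (hAZ : (A - Z).PosSemidef) : (Z - Z * A⁻¹ * Z).PosSemidef := by
  have := hA.isUnit.invertible
  have hZh : Zᴴ = Z := hZ.isHermitian.eq
  -- the ascriptions keep the rectangular products from elaborating via `CStarMatrix`
  have hsplit : fromBlocks A Z Zᴴ Z =
      (fromCols 1 0 : Matrix n (n ⊕ n) K)ᴴ * (A - Z) * (fromCols 1 0 : Matrix n (n ⊕ n) K) +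
        (fromCols 1 1 : Matrix n (n ⊕ n) K)ᴴ * Z * (fromCols 1 1 : Matrix n (n ⊕ n) K) := by
    simp only [conjTranspose_fromCols_eq_fromRows_conjTranspose, conjTranspose_one,
      conjTranspose_zero, mul_fromCols, fromRows_mul, fromCols_fromRows_eq_fromBlocks, one_mul,
      zero_mul, mul_one, mul_zero, fromBlocks_add, sub_add_cancel, zero_add, hZh]
  have hblock : (fromBlocks A Z Zᴴ Z).PosSemidef := by
    rw [hsplit]
    exact (hAZ.conjTranspose_mul_mul_same _).add (hZ.conjTranspose_mul_mul_same _)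
  rwa [hA.fromBlocks₁₁, hZh] at hblock

lemma PosDef.posSemidef_inv_sub_inv {X Y : Matrix n n K} (hX : X.PosDef)
    (hXY : (Y - X).PosSemidef) : (X⁻¹ - Y⁻¹).PosSemidef := by
  have hY : Y.PosDef := by simpa using hX.add_posSemidef hXY
  have hunit : IsUnit X ↔ IsUnit Y := iff_of_true hX.isUnit hY.isUnit
  have hconj : X⁻¹ - Y⁻¹ = X⁻¹ * ((Y - X) - (Y - X) * Y⁻¹ * (Y - X)) * X⁻¹ := calc
    X⁻¹ - Y⁻¹ = -(Y⁻¹ * (X - Y) * X⁻¹) := by rw [← inv_sub_inv hunit.symm, neg_sub]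
    _ = X⁻¹ * (Y - X) * X⁻¹ - (X⁻¹ - Y⁻¹) * (Y - X) * X⁻¹ := by noncomm_ring
    _ = X⁻¹ * ((Y - X) - (Y - X) * Y⁻¹ * (Y - X)) * X⁻¹ := by
      rw [inv_sub_inv hunit]; noncomm_ring
  have hgap := hY.posSemidef_sub_mul_inv_mul hXY (by simpa using hX.posSemidef)
  simpa only [hconj, hX.inv.isHermitian.eq] using hgap.conjTranspose_mul_mul_same X⁻¹

end Field

open scoped MatrixOrder ComplexOrder in
lemma PosSemidef.trace_mul_nonneg {n 𝕜 : Type*} [Fintype n] [DecidableEq n] [RCLike 𝕜]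
    {A B : Matrix n n 𝕜} (hA : A.PosSemidef) (hB : B.PosSemidef) : 0 ≤ (A * B).trace := by
  have hS : (CFC.sqrt A)ᴴ = CFC.sqrt A := (CFC.sqrt_nonneg A).isSelfAdjoint.star_eq
  rw [← CFC.sqrt_mul_sqrt_self A hA.nonneg, Matrix.mul_assoc, trace_mul_comm]
  simpa only [hS] using (hB.mul_mul_conjTranspose_same (CFC.sqrt A)).trace_nonneg

lemma trace_two_smul_sub_two_smul_sub_add_eq {n R : Type*} [Fintype n] [CommRing R]
    (A B Z : Matrix n n R) :
    trace ((2 : R) • (A * Z) - (2 : R) • (B * Z) - A * Z * A * Z + B * Z * B * Z) =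
      trace ((A - B) * Z * (A - B) * Z) + 2 * trace ((A - B) * (Z - Z * A * Z)) := by
  have hswap : trace (B * Z * A * Z) = trace (A * Z * B * Z) := by
    rw [Matrix.mul_assoc (B * Z), trace_mul_comm, ← Matrix.mul_assoc]
  simp only [sub_mul, mul_sub, trace_sub, trace_add, trace_smul, smul_eq_mul, ← Matrix.mul_assoc,
    hswap]
  ring

end Matrix

theorem key_trace_inequality_general (n : ℕ) (X Y Z : Matrix (Fin n) (Fin n) ℝ)
    (hX : X.PosDef) (hYX : (Y - X).PosSemidef)
    (hZ : Z.PosSemidef) (hXZ : (X - Z).PosSemidef) :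
    Matrix.trace ((X⁻¹ - Y⁻¹) * Z * (X⁻¹ - Y⁻¹) * Z) ≤
      Matrix.trace ((2 : ℝ) • (X⁻¹ * Z) - (2 : ℝ) • (Y⁻¹ * Z)
        - X⁻¹ * Z * X⁻¹ * Z + Y⁻¹ * Z * Y⁻¹ * Z) := by
  have hgap := (hX.posSemidef_inv_sub_inv hYX).trace_mul_nonneg
    (hX.posSemidef_sub_mul_inv_mul hZ hXZ)
  rw [trace_two_smul_sub_two_smul_sub_add_eq]
  linarith

/-- Lemma 5 (key trace inequality): for symmetric matrices with `0 < X ≤ Y` and `0 ≤ Z ≤ X`,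
`tr(2X⁻¹Z − 2Y⁻¹Z − X⁻¹ZX⁻¹Z + Y⁻¹ZY⁻¹Z) ≥ tr((X⁻¹ − Y⁻¹)Z(X⁻¹ − Y⁻¹)Z)`. -/
theorem key_trace_inequality (n : ℕ) (X Y Z : Matrix (Fin n) (Fin n) ℝ)
    (hXs : X.IsHermitian) (hYs : Y.IsHermitian) (hZs : Z.IsHermitian)
    (hX : X.PosDef) (hYX : (Y - X).PosSemidef)
    (hZ : Z.PosSemidef) (hXZ : (X - Z).PosSemidef) :
    Matrix.trace ((X⁻¹ - Y⁻¹) * Z * (X⁻¹ - Y⁻¹) * Z) ≤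
      Matrix.trace ((2 : ℝ) • (X⁻¹ * Z) - (2 : ℝ) • (Y⁻¹ * Z)
        - X⁻¹ * Z * X⁻¹ * Z + Y⁻¹ * Z * Y⁻¹ * Z) :=
  key_trace_inequality_general n X Y Z hX hYX hZ hXZ
end

section
/- Let X and Z be n×n real symmetric matrices with X positive definite, Z positive semidefinite, and X − Z positive semidefinite. Then Z − Z·X⁻¹·Z is positive semidefinite. -/
/-!
The block matrix `[[X, Z], [Z, Z]]` is the sum of `[[X - Z, 0], [0, 0]]` and `[[Z, Z], [Z, Z]]`,
both positive semidefinite, and `Z - Z X⁻¹ Z` is its Schur complement with respect to the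
positive definite block `X`.
-/

open Matrix

namespace Matrix.PosSemidef

variable {m n R : Type*} [Ring R] [PartialOrder R] [StarRing R]

theorem fromBlocks_zero [Fintype m] [Fintype n] [StarOrderedRing R] {A : Matrix m m R}
    {D : Matrix n n R} (hA : A.PosSemidef) (hD : D.PosSemidef) : (fromBlocks A 0 0 D).PosSemidef := by
  refine .of_dotProduct_mulVec_nonneg (hA.1.fromBlocks (by simp) hD.1) fun x => ?_
  convert add_nonneg (hA.dotProduct_mulVec_nonneg (x ∘ Sum.inl))
    (hD.dotProduct_mulVec_nonneg (x ∘ Sum.inr)) using 1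
  simp only [fromBlocks_mulVec, zero_mulVec, add_zero, zero_add, dotProduct_block,
    Sum.elim_comp_inl, Sum.elim_comp_inr]
  rfl

theorem fromBlocks_self {A : Matrix m m R} (hA : A.PosSemidef) :
    (fromBlocks A A A A).PosSemidef := by
  have hsub : fromBlocks A A A A = A.submatrix (Sum.elim id id) (Sum.elim id id) := by
    ext (i | i) (j | j) <;> rfl
  exact hsub ▸ hA.submatrix _

end Matrix.PosSemidef

theorem sub_mul_inv_mul_posSemidef_general (n : ℕ) (X Z : Matrix (Fin n) (Fin n) ℝ)
    (hX : X.PosDef) (hZ : Z.PosSemidef) (hXZ : (X - Z).PosSemidef) :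
    (Z - Z * X⁻¹ * Z).PosSemidef := by
  have := hX.isUnit.invertible
  have hZh : Zᴴ = Z := hZ.1.eq
  have hsplit : fromBlocks X Z Z Z = fromBlocks (X - Z) 0 0 0 + fromBlocks Z Z Z Z := by
    simp [fromBlocks_add]
  have hblock : (fromBlocks X Z Zᴴ Z).PosSemidef := by
    rw [hZh, hsplit]
    exact (hXZ.fromBlocks_zero .zero).add hZ.fromBlocks_self
  simpa only [hZh] using (PosDef.fromBlocks₁₁ Z Z hX).mp hblock

/-- If `X` is positive definite, `Z` positive semidefinite and `X − Z` positive semidefinite,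
then `Z − Z X⁻¹ Z` is positive semidefinite. -/
theorem sub_mul_inv_mul_posSemidef (n : ℕ) (X Z : Matrix (Fin n) (Fin n) ℝ)
    (hXs : X.IsHermitian) (hZs : Z.IsHermitian)
    (hX : X.PosDef) (hZ : Z.PosSemidef) (hXZ : (X - Z).PosSemidef) :
    (Z - Z * X⁻¹ * Z).PosSemidef :=
  sub_mul_inv_mul_posSemidef_general n X Z hX hZ hXZ
end
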